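/- Lower semicontinuity of conical integrals (scalar form of Lemma 3(3) of the paper). Let F : ℝⁿ × (0,∞) → [0,∞] be measurable. Then the function x ↦ ∫_{Γ(x)} F dμ from ℝⁿ to [0,∞] is lower semicontinuous; in particular, for every λ > 0 the set {x ∈ ℝⁿ : ∫_{Γ(x)} F dμ > λ} is open. -/
import Mathlib

open MeasureTheory ENNReal Metric Set

noncomputable section

/-- The cone `Γ(x) = {(y,t) : ‖x - y‖ < t}` in the upper half-space. -/
def cone (n : ℕ) (x : EuclideanSpace ℝ (Fin n)) : Set (EuclideanSpace ℝ (Fin n) × ℝ) :=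
  {p | dist x p.1 < p.2}

/-- The measure `dμ(y,t) = dy dt / t^(n+1)` on the upper half-space. -/
def muT (n : ℕ) : Measure (EuclideanSpace ℝ (Fin n) × ℝ) :=
  (volume.restrict {p : EuclideanSpace ℝ (Fin n) × ℝ | 0 < p.2}).withDensity
    fun p => ENNReal.ofReal (p.2 ^ (-(n + 1 : ℝ)))

/-- Lower semicontinuity of conical integrals: for measurable `F : ℝⁿ × (0,∞) → [0,∞]`,
the function `x ↦ ∫_{Γ(x)} F dμ` is lower semicontinuous; in particular for every `λ > 0`
the superlevel set `{x : ∫_{Γ(x)} F dμ > λ}` is open. -/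
theorem cone_integral_lsc (n : ℕ) (F : EuclideanSpace ℝ (Fin n) × ℝ → ℝ≥0∞)
    (hF : Measurable F) :
    LowerSemicontinuous (fun x => ∫⁻ p in cone n x, F p ∂muT n) ∧
    ∀ l : ℝ≥0∞, 0 < l → IsOpen {x | l < ∫⁻ p in cone n x, F p ∂muT n} := by
  have hlsc : LowerSemicontinuous (fun x => ∫⁻ p in cone n x, F p ∂muT n) := by
    intro x y hy
    -- shrunk cones
    set s : ℕ → Set (EuclideanSpace ℝ (Fin n) × ℝ) :=
      fun k => {p | dist x p.1 + ((k : ℝ) + 1)⁻¹ < p.2} with hs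
    have hmono : Monotone s := by
      intro i j hij p hp
      simp only [hs, mem_setOf_eq] at hp ⊢
      refine lt_of_le_of_lt ?_ hp
      have h1 : ((j:ℝ)+1)⁻¹ ≤ ((i:ℝ)+1)⁻¹ := by
        apply inv_anti₀ (by positivity)
        exact_mod_cast Nat.succ_le_succ hij
      linarith
    have hunion : ⋃ k, s k = cone n x := by
      ext p
      simp only [mem_iUnion, hs, mem_setOf_eq, cone]
      constructor
      · rintro ⟨k, hk⟩
        have : (0:ℝ) < ((k : ℝ) + 1)⁻¹ := by positivity
        linarith
      · intro hp
        obtain ⟨k, hk⟩ := exists_nat_one_div_lt (sub_pos.mpr hp)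
        refine ⟨k, ?_⟩
        rw [one_div] at hk
        linarith
    have key : ∫⁻ p in cone n x, F p ∂muT n = ⨆ k, ∫⁻ p in s k, F p ∂muT n := by
      rw [← hunion, setLIntegral_iUnion_of_directed _ hmono.directed_le]
    simp only at hy
    rw [key] at hy
    obtain ⟨k, hk⟩ := lt_iSup_iff.mp hy
    have hball : ∀ x' ∈ ball x ((k : ℝ) + 1)⁻¹, s k ⊆ cone n x' := by
      intro x' hx' p hp
      have h1 : dist x' p.1 ≤ dist x' x + dist x p.1 := dist_triangle _ _ _
      have h2 : dist x' x < ((k : ℝ) + 1)⁻¹ := mem_ball.mp hx'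
      have : dist x x' = dist x' x := dist_comm _ _
      simp only [hs, mem_setOf_eq] at hp
      exact lt_of_le_of_lt h1 (by linarith)
    filter_upwards [ball_mem_nhds x (by positivity : (0:ℝ) < ((k : ℝ) + 1)⁻¹)] with x' hx'
    exact lt_of_lt_of_le hk (lintegral_mono_set (hball x' hx'))
  refine ⟨hlsc, fun l _ => ?_⟩
  exact hlsc.isOpen_preimage l

end
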